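/- McCarty realizability validates the extensionality axiom: in the realizability structure on well-founded labelled trees, there is a natural number e such that for all trees v, w, if n realizes ∀x (x ε v ↔ x ε w) then e(n) is defined and realizes v = w. -/

import Mathlib

/-- Kleene application: evaluate the partial recursive function with code `n` at `m`. -/
def kapp (n m : ℕ) : Part ℕ := (Denumerable.ofNat Nat.Partrec.Code n).eval m

/-- McCarty's realizability universe: well-founded trees `sup(S)` where `S` is a
set of pairs `(m, v)` with `m ∈ ℕ` and `v` a tree (presented by an indexed family). -/
inductive V : Type 1
  | sup : (I : Type) → (I → ℕ × V) → V

/-- The set of labelled edges into (the root of) a tree. -/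
def V.E : V → Set (ℕ × V)
  | V.sup _ t => Set.range t

mutual
  /-- `RMem n x w`: `n ⊩ x ε w`, i.e. there is `(m, v) ∈ E(w)` with `n₀ = m` and
  `n₁ ⊩ x = v`. -/
  inductive RMem : ℕ → V → V → Prop
    | intro (n : ℕ) (x w v : V) (h : (n.unpair.1, v) ∈ w.E)
        (h2 : REq n.unpair.2 x v) : RMem n x w
  /-- `REq n w w'`: `n ⊩ w = w'`, i.e. for all `(m, v) ∈ E(w)`, `n₀(m)` is defined and
  `n₀(m) ⊩ v ε w'`, and for all `(m', v') ∈ E(w')`, `n₁(m')` is defined and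
  `n₁(m') ⊩ v' ε w`. -/
  inductive REq : ℕ → V → V → Prop
    | intro (n : ℕ) (w w' : V)
        (d1 : ∀ m v, (m, v) ∈ w.E → (kapp n.unpair.1 m).Dom)
        (h1 : ∀ m v (h : (m, v) ∈ w.E),
          RMem ((kapp n.unpair.1 m).get (d1 m v h)) v w')
        (d2 : ∀ m' v', (m', v') ∈ w'.E → (kapp n.unpair.2 m').Dom)
        (h2 : ∀ m' v' (h : (m', v') ∈ w'.E),
          RMem ((kapp n.unpair.2 m').get (d2 m' v' h)) v' w) :
        REq n w w'
end

/-- Kleene realizability of an implication between two abstractly realized statements: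
`n ⊩ φ → ψ` iff for every `m ⊩ φ`, `n(m)` is defined and `n(m) ⊩ ψ`. -/
def RImp (P Q : ℕ → Prop) (n : ℕ) : Prop :=
  ∀ m, P m → ∃ k, k ∈ kapp n m ∧ Q k


/-!
By Kleene's recursion theorem there is a uniform realizer `r` of `x = x` for all trees `x`:
take `r = ⟨c, c⟩` with `c(m) = ⟨m, r⟩`. Then `⟨m, r⟩ ⊩ v ε w` for every edge `(m, v)` of `w`.
So if `n ⊩ ∀x (x ε v ↔ x ε w)`, the pair of codes `m ↦ n₀(⟨m, r⟩)` and `m ↦ n₁(⟨m, r⟩)`,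
which is computable from `n`, realizes `v = w`.
-/

open Nat.Partrec (Code)
open Nat.Partrec.Code

theorem V.edge_induction {P : V → Prop}
    (h : ∀ w : V, (∀ m v, (m, v) ∈ w.E → P v) → P w) (x : V) : P x :=
  V.rec (motive_1 := P) (motive_2 := fun p => P p.2)
    (fun _ _ ih => h _ fun _ _ ⟨i, hi⟩ => by simpa only [hi] using ih i) (fun _ _ hv => hv) x

theorem RMem.of_edge {m r : ℕ} {v w : V} (h : (m, v) ∈ w.E) (hr : REq r v v) :
    RMem (Nat.pair m r) v w :=
  RMem.intro _ v w v (by rwa [Nat.unpair_pair]) (by rwa [Nat.unpair_pair])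

theorem REq.of_edges {n : ℕ} {w w' : V}
    (h1 : ∀ m v, (m, v) ∈ w.E → ∃ k ∈ kapp n.unpair.1 m, RMem k v w')
    (h2 : ∀ m v, (m, v) ∈ w'.E → ∃ k ∈ kapp n.unpair.2 m, RMem k v w) : REq n w w' := by
  choose f hf hfr using h1
  choose g hg hgr using h2
  refine REq.intro _ _ _ (fun m v h => Part.dom_iff_mem.2 ⟨_, hf m v h⟩) (fun m v h => ?_)
    (fun m v h => Part.dom_iff_mem.2 ⟨_, hg m v h⟩) (fun m v h => ?_)
  · rw [Part.get_eq_of_mem (hf m v h)]; exact hfr m v h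
  · rw [Part.get_eq_of_mem (hg m v h)]; exact hgr m v h

theorem kapp_encode (c : Code) (m : ℕ) : kapp (Encodable.encode c) m = c.eval m := by
  rw [kapp, Denumerable.ofNat_encode]

theorem exists_kapp_eq_pair_pair_self :
    ∃ c : ℕ, ∀ m, kapp c m = Part.some (Nat.pair m (Nat.pair c c)) := by
  have hf : Computable₂ fun (c : Code) m =>
      Nat.pair m (Nat.pair (Encodable.encode c) (Encodable.encode c)) :=
    Primrec.to_comp <| Primrec₂.natPair.comp Primrec.snd
      (Primrec₂.natPair.comp (Primrec.encode.comp .fst) (Primrec.encode.comp .fst))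
  obtain ⟨c, hc⟩ := fixed_point₂ hf.partrec₂
  exact ⟨Encodable.encode c, fun m => by rw [kapp_encode, hc]; rfl⟩

theorem REq.refl_of_kapp_eq_pair {c : ℕ}
    (hc : ∀ m, kapp c m = Part.some (Nat.pair m (Nat.pair c c))) (x : V) :
    REq (Nat.pair c c) x x := by
  induction x using V.edge_induction with
  | h x ih =>
    have hedge : ∀ m v, (m, v) ∈ x.E → RMem (Nat.pair m (Nat.pair c c)) v x :=
      fun m v h => RMem.of_edge h (ih m v h)
    refine REq.of_edges (fun m v h => ⟨_, ?_, hedge m v h⟩) (fun m v h => ⟨_, ?_, hedge m v h⟩)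
    all_goals rw [Nat.unpair_pair, hc]; exact Part.mem_some _

theorem exists_kapp_curry_eq_comp {f : ℕ → ℕ} (hf : Computable f) :
    ∃ d : Code, ∀ a m, kapp (Encodable.encode (curry d a)) m = kapp a (f m) := by
  have hd : Partrec fun x : ℕ => kapp x.unpair.1 (f x.unpair.2) :=
    eval_part.comp ((Computable.ofNat Code).comp (Computable.fst.comp Computable.unpair))
      (hf.comp (Computable.snd.comp Computable.unpair))
  obtain ⟨d, hd⟩ := exists_code.1 (Partrec.nat_iff.1 hd)
  exact ⟨d, fun a m => by simp [kapp_encode, eval_curry, hd]⟩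

theorem exists_kapp_pair_comp {f : ℕ → ℕ} (hf : Computable f) :
    ∃ e : ℕ, ∀ n, ∃ k ∈ kapp e n, ∀ m,
      kapp k.unpair.1 m = kapp n.unpair.1 (f m) ∧ kapp k.unpair.2 m = kapp n.unpair.2 (f m) := by
  obtain ⟨d, hd⟩ := exists_kapp_curry_eq_comp hf
  have hcurry : Primrec fun a => Encodable.encode (curry d a) :=
    Primrec.encode.comp (primrec₂_curry.comp (Primrec.const d) Primrec.id)
  let g (n : ℕ) :=
    Nat.pair (Encodable.encode (curry d n.unpair.1)) (Encodable.encode (curry d n.unpair.2))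
  have hg : Computable g :=
    Primrec.to_comp <| Primrec₂.natPair.comp (hcurry.comp (Primrec.fst.comp Primrec.unpair))
      (hcurry.comp (Primrec.snd.comp Primrec.unpair))
  obtain ⟨e, he⟩ := exists_code.1 (Partrec.nat_iff.1 hg.partrec)
  refine ⟨Encodable.encode e, fun n => ⟨g n, ?_, fun m => ?_⟩⟩
  · rw [kapp_encode, he]; exact Part.mem_some _
  · simp only [g, Nat.unpair_pair, hd, and_self]

/-- McCarty realizability validates extensionality: there is a natural number `e` such
that for all trees `v, w`, if `n` realizes `∀x (x ε v ↔ x ε w)` (uniform universal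
quantifier, `↔` as the pairing of two implications) then `e(n)` is defined and realizes
`v = w`. -/
theorem extensionality_realized :
    ∃ e : ℕ, ∀ (v w : V) (n : ℕ),
      (∀ x : V,
        RImp (fun m => RMem m x v) (fun k => RMem k x w) n.unpair.1 ∧
        RImp (fun m => RMem m x w) (fun k => RMem k x v) n.unpair.2) →
      ∃ k, k ∈ kapp e n ∧ REq k v w := by
  obtain ⟨c, hc⟩ := exists_kapp_eq_pair_pair_self
  have hrefl := REq.refl_of_kapp_eq_pair hc
  obtain ⟨e, he⟩ := exists_kapp_pair_comp (f := fun m => Nat.pair m (Nat.pair c c))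
    (Primrec.to_comp (Primrec₂.natPair.comp Primrec.id (Primrec.const _)))
  refine ⟨e, fun v w n H => ?_⟩
  obtain ⟨k, hk, hkn⟩ := he n
  refine ⟨k, hk, REq.of_edges (fun m x h => ?_) (fun m x h => ?_)⟩
  · rw [(hkn m).1]; exact (H x).1 _ (RMem.of_edge h (hrefl x))
  · rw [(hkn m).2]; exact (H x).2 _ (RMem.of_edge h (hrefl x))
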